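/- The Hopf algebra Y^(1) is cocommutative: F ∘ Δ = Δ, where F: Y^(1) ⊗ Y^(1) → Y^(1) ⊗ Y^(1) is the flip map F(P ⊗ Q) = Q ⊗ P. -/

import Mathlib

open scoped TensorProduct

noncomputable section

namespace FreeProb

attribute [local instance] Classical.propDecidable

/-! ### Non-crossing partitions of `{1,…,n}`, modelled as setoids on `Fin n` -/

/-- The partition `0_n` of `Fin n` into singletons. -/
def botS (n : ℕ) : Setoid (Fin n) := ⟨Eq, eq_equivalence⟩

/-- The partition `1_n` of `Fin n` with a single block. -/
def topS (n : ℕ) : Setoid (Fin n) :=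
  ⟨fun _ _ => True, ⟨fun _ => trivial, fun _ => trivial, fun _ _ => trivial⟩⟩

/-- A partition is non-crossing if there is no crossing `a < b < c < d` with
`a ∼ c`, `b ∼ d` lying in different blocks. -/
def IsNC {n : ℕ} (s : Setoid (Fin n)) : Prop :=
  ∀ a b c d : Fin n, a < b → b < c → c < d → s.r a c → s.r b d → s.r a b

/-- The lattice `NC(n)` of non-crossing partitions, ordered by reversed refinement
(the order inherited from the lattice of setoids). -/
abbrev NC (n : ℕ) := {s : Setoid (Fin n) // IsNC s}

instance (n : ℕ) : Finite (Setoid (Fin n)) :=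
  Finite.of_injective (fun s => s.r) (by intro s t h; cases s; cases t; cases h; rfl)

noncomputable instance (n : ℕ) : Fintype (Setoid (Fin n)) := Fintype.ofFinite _

noncomputable instance (n : ℕ) : Fintype (NC n) := Fintype.ofFinite _

/-- `0_n` as a non-crossing partition. -/
def ncBot (n : ℕ) : NC n :=
  ⟨botS n, by
    intro a b c d h1 h2 h3 hac _
    have hac' : a = c := hac
    subst hac'
    exact absurd (h1.trans h2) (lt_irrefl _)⟩

/-- `1_n` as a non-crossing partition. -/
def ncTop (n : ℕ) : NC n := ⟨topS n, fun _ _ _ _ _ _ _ _ _ => trivial⟩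

/-- The blocks of a partition, as a finset of finsets. -/
def blocks {n : ℕ} (s : Setoid (Fin n)) : Finset (Finset (Fin n)) :=
  Finset.univ.image fun a => Finset.univ.filter fun b => s.r a b

/-- The next element of the block of `b`, in increasing cyclic order. -/
def nextFun {n : ℕ} (s : Setoid (Fin n)) (b : Fin n) : Fin n :=
  let B : Finset (Fin n) := Finset.univ.filter fun a => s.r b a
  let A : Finset (Fin n) := B.filter fun a => b < a
  if h : A.Nonempty then A.min' h
  else B.min' ⟨b, Finset.mem_filter.mpr ⟨Finset.mem_univ b, s.iseqv.refl b⟩⟩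

/-- The permutation `P_π` associated to a partition `π`: its cycles are the blocks
of `π`, traversed in increasing order.  (The function `nextFun` is indeed bijective,
so the `dite` below always takes its first branch.) -/
def permOf {n : ℕ} (s : Setoid (Fin n)) : Equiv.Perm (Fin n) :=
  if h : Function.Bijective (nextFun s) then Equiv.ofBijective _ h else 1

/-- The partition of `Fin n` into the cycles (orbits) of a permutation. -/
def cycleSetoid {n : ℕ} (σ : Equiv.Perm (Fin n)) : Setoid (Fin n) :=
  ⟨σ.SameCycle, ⟨fun x => Equiv.Perm.SameCycle.refl σ x, fun h => h.symm, fun h h' => h.trans h'⟩⟩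

/-- The Kreweras complement `K(π)`, determined by `P_{K(π)} = P_π⁻¹ * P_{1_n}`. -/
def kreweras {n : ℕ} (s : Setoid (Fin n)) : Setoid (Fin n) :=
  cycleSetoid ((permOf s)⁻¹ * permOf (topS n))

/-- The relative Kreweras complement `K_t(s)`, determined by `P_{K_t(s)} = P_s⁻¹ * P_t`. -/
def relKreweras {n : ℕ} (s t : Setoid (Fin n)) : Setoid (Fin n) :=
  cycleSetoid ((permOf s)⁻¹ * permOf t)

/-! ### Words, and the Hopf algebra `Y^(k)` -/

/-- Words over the alphabet `{1,…,k}`, encoded as pairs `⟨n, w⟩` with `w : Fin n → Fin k`. -/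
abbrev WordIdx (k : ℕ) := Σ n : ℕ, Fin n → Fin k

/-- The commutative polynomial algebra `Y^(k) = ℂ[Y_w : |w| ≥ 2]`. -/
abbrev Yalg (k : ℕ) := MvPolynomial {p : WordIdx k // 2 ≤ p.1} ℂ

/-- The generator `Y_w`, with the convention `Y_w = 1` for `|w| ≤ 1`. -/
def Ygen {k : ℕ} (p : WordIdx k) : Yalg k :=
  if h : 2 ≤ p.1 then MvPolynomial.X ⟨p, h⟩ else 1

/-- The subword `w|B` of `w` on the positions in `B` (in increasing order). -/
def subword {k n : ℕ} (w : Fin n → Fin k) (B : Finset (Fin n)) : Fin B.card → Fin k :=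
  fun i => w (B.orderIsoOfFin rfl i).1

/-- The element `Y_{w;π} = ∏_{B block of π} Y_{w|B}`. -/
def Yprod {k n : ℕ} (w : Fin n → Fin k) (s : Setoid (Fin n)) : Yalg k :=
  ∏ B ∈ blocks s, Ygen ⟨B.card, subword w B⟩

/-- The comultiplication of `Y^(k)`:
`Δ(Y_w) = ∑_{π ∈ NC(n)} Y_{w;π} ⊗ Y_{w;K(π)}`. -/
def Δk (k : ℕ) : Yalg k →ₐ[ℂ] Yalg k ⊗[ℂ] Yalg k :=
  MvPolynomial.aeval fun q : {p : WordIdx k // 2 ≤ p.1} =>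
    ∑ π : NC q.1.1, Yprod q.1.2 π.1 ⊗ₜ[ℂ] Yprod q.1.2 (kreweras π.1)

/-- The counit of `Y^(k)`: `ε(Y_w) = 0` for `|w| ≥ 2`. -/
def εk (k : ℕ) : Yalg k →ₐ[ℂ] ℂ := MvPolynomial.aeval fun _ => 0

/-- The grading of `Y^(k)` in which `Y_w` is homogeneous of degree `|w| - 1`. -/
def Ycomp (k n : ℕ) : Submodule ℂ (Yalg k) :=
  MvPolynomial.weightedHomogeneousSubmodule ℂ (fun q : {p : WordIdx k // 2 ≤ p.1} => q.1.1 - 1) n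

/-! ### Convolution of linear functionals on a bialgebra -/

variable {A : Type} [CommRing A] [Algebra ℂ A]

/-- Convolution `ξη := mult ∘ (ξ ⊗ η) ∘ Δ` of two linear functionals. -/
def convF (D : A →ₐ[ℂ] A ⊗[ℂ] A) (ξ η : A →ₗ[ℂ] ℂ) : A →ₗ[ℂ] ℂ :=
  LinearMap.mul' ℂ ℂ ∘ₗ TensorProduct.map ξ η ∘ₗ D.toLinearMap

/-- Convolution powers `ξ^m`, with `ξ^0 := e` (the counit). -/
def convPowF (D : A →ₐ[ℂ] A ⊗[ℂ] A) (e ξ : A →ₗ[ℂ] ℂ) : ℕ → (A →ₗ[ℂ] ℂ)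
  | 0 => e
  | m + 1 => convF D (convPowF D e ξ m) ξ

/-- `(log η)(x) = -∑_{ℓ ≥ 1} (1/ℓ) (e - η)^ℓ (x)`, the logarithm of a functional `η`
with respect to convolution (`e` is the counit).  On each `x` the sum has only finitely
many nonzero terms, so the `tsum` below is the honest value. -/
def logFunF (D : A →ₐ[ℂ] A ⊗[ℂ] A) (e η : A →ₗ[ℂ] ℂ) (x : A) : ℂ :=
  -∑' ℓ : ℕ, (1 / ((ℓ : ℂ) + 1)) * convPowF D e (e - η) (ℓ + 1) x

/-! ### Distributions, R-transforms, free multiplicative convolution -/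

/-- A distribution (or a family of coefficients of a power series in `k` non-commuting
indeterminates), encoded by its values on all words. -/
abbrev Dist (k : ℕ) := WordIdx k → ℂ

/-- `μ ∈ G_k`: `μ(1) = 1` and `μ(X_i) = 1` for all `i`. -/
def InG {k : ℕ} (μ : Dist k) : Prop :=
  (∀ w : Fin 0 → Fin k, μ ⟨0, w⟩ = 1) ∧ (∀ w : Fin 1 → Fin k, μ ⟨1, w⟩ = 1)

/-- `Cf_{w;π}(f) = ∏_{B block of π} Cf_{w|B}(f)`, for a coefficient family `α`. -/
def cfPart {k n : ℕ} (α : Dist k) (w : Fin n → Fin k) (s : Setoid (Fin n)) : ℂ :=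
  ∏ B ∈ blocks s, α ⟨B.card, subword w B⟩

/-- `α` is (the coefficient family of) the R-transform of `μ`:
the moment–cumulant relations hold. -/
def IsRTransform {k : ℕ} (μ α : Dist k) : Prop :=
  (∀ w : Fin 0 → Fin k, α ⟨0, w⟩ = 0) ∧
  ∀ (n : ℕ) (w : Fin n → Fin k), 1 ≤ n → μ ⟨n, w⟩ = ∑ π : NC n, cfPart α w π.1

/-- `γ` is the R-transform of the free multiplicative convolution of distributions
with R-transforms `α` and `β`:
`Cf_w(R_{μ⊠ν}) = ∑_{π ∈ NC(n)} Cf_{w;π}(R_μ) Cf_{w;K(π)}(R_ν)`. -/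
def IsBoxtimes {k : ℕ} (α β γ : Dist k) : Prop :=
  ∀ (n : ℕ) (w : Fin n → Fin k), 1 ≤ n →
    γ ⟨n, w⟩ = ∑ π : NC n, cfPart α w π.1 * cfPart β w (kreweras π.1)

/-- The unit `μ_o` of `(G_k, ⊠)`: all moments equal to `1`. -/
def distUnit (k : ℕ) : Dist k := fun _ => 1

/-- The character `χ_μ` of `Y^(k)` associated to a distribution with R-transform `α`:
`χ_μ(Y_w) = Cf_w(R_μ)`. -/
def charOf {k : ℕ} (α : Dist k) : Yalg k →ₐ[ℂ] ℂ :=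
  MvPolynomial.aeval fun q => α q.1

/-- The generalized coefficient `Cf_w^(Γ)(f) = ∏_{j=1}^{ℓ} Cf_{w;K_{π_j}(π_{j-1})}(f)`
attached to a (multi-)chain `Γ = (π_0,…,π_{m+1})` in `NC(n)`. -/
def cfChain {k n : ℕ} (α : Dist k) (w : Fin n → Fin k) (m : ℕ)
    (c : Fin (m + 2) → Setoid (Fin n)) : ℂ :=
  ∏ j : Fin (m + 1), cfPart α w (relKreweras (c j.castSucc) (c j.succ))

/-- The `i`-th marginal coefficients: the free cumulants of the `i`-th marginal `μ_i`
are `Cf_{(i,…,i)}(R_μ)`. -/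
def margFam {k : ℕ} (α : Dist k) (i : Fin k) : Dist 1 := fun q => α ⟨q.1, fun _ => i⟩

/-! ### Iterated comultiplication -/

/-- The iterated tensor powers `Y^(k) ⊗ ⋯ ⊗ Y^(k)` (`m+1` factors), as objects of
`ModuleCat ℂ` so that the recursion carries its module structure. -/
def YpowM (k : ℕ) : ℕ → ModuleCat ℂ
  | 0 => ModuleCat.of ℂ (Yalg k)
  | m + 1 => ModuleCat.of ℂ (Yalg k ⊗[ℂ] YpowM k m)

/-- The iterated comultiplication: `Δiter k m = Δ^{m+1}` in the notation of the paper
(`Δiter k 0 = id`, `Δiter k (m+1) = (id ⊗ Δ^{m+1}) ∘ Δ`). -/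
def Δiter (k : ℕ) : ∀ m : ℕ, Yalg k →ₗ[ℂ] YpowM k m
  | 0 => LinearMap.id
  | m + 1 => TensorProduct.map LinearMap.id (Δiter k m) ∘ₗ (Δk k).toLinearMap

/-- The pure tensor `Y_{w;K_{π_1}(π_0)} ⊗ ⋯ ⊗ Y_{w;K_{π_{m+1}}(π_m)}` attached to a
multi-chain `(π_0, …, π_{m+1})`. -/
def chainTensor {k n : ℕ} (w : Fin n → Fin k) :
    ∀ m : ℕ, (Fin (m + 2) → Setoid (Fin n)) → YpowM k m
  | 0, c => Yprod w (relKreweras (c 0) (c 1))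
  | m + 1, c => Yprod w (relKreweras (c 0) (c 1)) ⊗ₜ[ℂ] chainTensor w m (fun i => c i.succ)

/-! ### One-variable power series tools -/

/-- The R-transform of a one-variable distribution, as a power series. -/
def Rser (α : Dist 1) : PowerSeries ℂ :=
  PowerSeries.mk fun m => if m = 0 then 0 else α ⟨m, fun _ => 0⟩

/-- Composition `f ∘ g` of formal power series (the honest composition whenever
`g` has vanishing constant term). -/
def psComp (f g : PowerSeries ℂ) : PowerSeries ℂ :=
  PowerSeries.mk fun m =>
    ∑ j ∈ Finset.range (m + 1), PowerSeries.coeff (R := ℂ) j f * PowerSeries.coeff (R := ℂ) m (g ^ j)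

/-- `S` is the S-transform of the distribution with R-transform `α`:
`S(z) = (1/z)·R^{⟨-1⟩}(z)`, i.e. `z·S(z)` is the compositional inverse of `R`. -/
def SChar (α : Dist 1) (S : PowerSeries ℂ) : Prop :=
  PowerSeries.constantCoeff (R := ℂ) S = 1 ∧
  psComp (Rser α) (PowerSeries.X * S) = PowerSeries.X ∧
  psComp (PowerSeries.X * S) (Rser α) = PowerSeries.X

/-- The formal logarithm `log f = -∑_{ℓ≥1} (1/ℓ)(1-f)^ℓ = ∑_{ℓ≥1} ((-1)^{ℓ+1}/ℓ)(f-1)^ℓ`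
of a power series (the honest logarithm whenever `f` has constant term 1). -/
def psLog {B : Type} [CommRing B] [Algebra ℂ B] (f : PowerSeries B) : PowerSeries B :=
  PowerSeries.mk fun m =>
    ∑ ℓ ∈ Finset.range (m + 1), ((-1 : ℂ) ^ (ℓ + 1) / ℓ) • PowerSeries.coeff (R := B) m ((f - 1) ^ ℓ)

/-- The coefficient-wise LS-transform of a one-variable distribution, as a power series. -/
def LSseries (α : Dist 1) : PowerSeries ℂ :=
  PowerSeries.mk fun n =>
    if 2 ≤ n then
      logFunF (Δk 1) (εk 1).toLinearMap (charOf α).toLinearMap (Ygen ⟨n, fun _ => 0⟩)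
    else 0

/-! ### The Hopf algebra `Sym` of symmetric functions -/

/-- `Sym`, realized as the free commutative algebra on the complete homogeneous
symmetric functions `h_1, h_2, …`. -/
abbrev SymA := MvPolynomial {m : ℕ // 1 ≤ m} ℂ

/-- The complete homogeneous symmetric function `h_m` (with `h_0 = 1`). -/
def Hgen (m : ℕ) : SymA := if h : 1 ≤ m then MvPolynomial.X ⟨m, h⟩ else 1

/-- The comultiplication of `Sym`: `Δ(h_n) = ∑_{i=0}^n h_i ⊗ h_{n-i}`. -/
def ΔSym : SymA →ₐ[ℂ] SymA ⊗[ℂ] SymA :=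
  MvPolynomial.aeval fun q : {m : ℕ // 1 ≤ m} =>
    ∑ i ∈ Finset.range (q.1 + 1), Hgen i ⊗ₜ[ℂ] Hgen (q.1 - i)

/-- The counit of `Sym`. -/
def εSym : SymA →ₐ[ℂ] ℂ := MvPolynomial.aeval fun _ => 0

/-- The generating series `h(z) = 1 + ∑ (-1)^n h_n z^n`. -/
def hSymSeries : PowerSeries SymA :=
  PowerSeries.mk fun m => if m = 0 then 1 else (-1 : SymA) ^ m * Hgen m

/-- The generating series `e(z) = 1 + ∑ e_n z^n = 1/h(z)`. -/
def eSymSeries : PowerSeries SymA := PowerSeries.invOfUnit hSymSeries 1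

/-- The elementary symmetric function `e_m`, defined through `e(z) = 1/h(z)`. -/
def eSym (m : ℕ) : SymA := PowerSeries.coeff (R := SymA) m eSymSeries

/-- The power sum symmetric function `p_m`, defined through
`log e(z) = ∑_{m≥1} ((-1)^{m+1}/m) p_m z^m`. -/
def pSym (m : ℕ) : SymA :=
  ((-1 : ℂ) ^ (m + 1) * m) • PowerSeries.coeff (R := SymA) m (psLog eSymSeries)

/-- The grading of `Sym` (`h_n` homogeneous of degree `n`). -/
def SymComp (n : ℕ) : Submodule ℂ SymA :=
  MvPolynomial.weightedHomogeneousSubmodule ℂ (fun q : {m : ℕ // 1 ≤ m} => q.1) n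

/-- The symmetric function `y_n = ∑_{π ∈ NC(n-1)} ∏_{B block of π} e_{|B|}`. -/
def ySym (n : ℕ) : SymA := ∑ π : NC (n - 1), ∏ B ∈ blocks π.1, eSym B.card

/-- The homomorphism `Φ : Y^(1) → Sym`, `Φ(Y_n) = y_n`. -/
def Phi : Yalg 1 →ₐ[ℂ] SymA := MvPolynomial.aeval fun q => ySym q.1.1

/-- The character `θ_μ` of `Sym` attached to a distribution with S-transform `S`:
`θ_μ(h_n) = (-1)^n β_n` where `S(z) = 1 + ∑ β_n z^n`. -/
def thetaOf (S : PowerSeries ℂ) : SymA →ₐ[ℂ] ℂ :=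
  MvPolynomial.aeval fun q : {m : ℕ // 1 ≤ m} =>
    (-1 : ℂ) ^ q.1 * PowerSeries.coeff (R := ℂ) q.1 S

/-- Infinitesimal characters of `Sym`. -/
def IsInfCharSym (ξ : SymA →ₗ[ℂ] ℂ) : Prop :=
  ∀ u v : SymA, ξ (u * v) = ξ u * εSym v + εSym u * ξ v

/-!
For one letter `Y_π` only depends on the block sizes of `π`. The Kreweras complement is a
bijection of `NC(n)`, and `K(K(π))` is the cycle partition of `P_{1_n}⁻¹ P_π P_{1_n}`, a conjugate
of `P_π`, so it has the block sizes of `π`. Reindexing `∑_π Y_π ⊗ Y_{K(π)}` by `π ↦ K(π)` gives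
`∑_π Y_{K(π)} ⊗ Y_π`.

Both facts rest on `P_{K(π)} = σ := P_π⁻¹ P_{1_n}` for non-crossing `π`, i.e. `σ` runs through each
of its cycles in increasing order. Each cycle of `σ` contains a descent `σ x ≤ x` (its maximum), and
`σ` has exactly `n + 1 - #π` descents. On the other hand the genus inequality `#π + #cycles(σ) ≥ n + 1`
holds by induction on `#π`: merging the block of `0` with the block of the least element outside
it keeps `π` non-crossing and multiplies `P_π` by a transposition, which changes the number of
cycles of `σ` by at most one. So every cycle has exactly one descent, and increasing order follows.
Finally two crossing arcs `x → σ x`, `y → σ y` of `K(π)` would produce a crossing of `π`.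
-/

open Finset

section Blocks

variable {n : ℕ}

def block (s : Setoid (Fin n)) (x : Fin n) : Finset (Fin n) :=
  univ.filter fun y => s.r x y

@[simp] lemma mem_block {s : Setoid (Fin n)} {x y : Fin n} : y ∈ block s x ↔ s.r x y := by
  simp [block]

lemma block_eq_of_rel {s : Setoid (Fin n)} {x y : Fin n} (h : s.r x y) :
    block s x = block s y := by
  ext z
  simp only [mem_block]
  exact ⟨s.trans' (s.symm' h), s.trans' h⟩

lemma setOf_rel_eq_of_rel {s : Setoid (Fin n)} {x y : Fin n} (h : s.r x y) :
    {z | s.r x z} = {z | s.r y z} :=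
  Set.ext fun _ => ⟨s.trans' (s.symm' h), s.trans' h⟩

lemma mem_blocks {s : Setoid (Fin n)} {C : Finset (Fin n)} :
    C ∈ blocks s ↔ ∃ x, block s x = C := by
  simp [blocks, block]

lemma block_mem_blocks (s : Setoid (Fin n)) (x : Fin n) : block s x ∈ blocks s :=
  mem_blocks.2 ⟨x, rfl⟩

lemma card_blocks_eq_card_filter {s : Setoid (Fin n)} (P : Fin n → Prop) [DecidablePred P]
    (hP : ∀ x, ∃! y, s.r x y ∧ P y) : #(blocks s) = #(univ.filter P) := by
  symm
  refine card_bij (fun x _ => block s x) (fun x _ => block_mem_blocks s x) ?_ ?_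
  · intro x hx y hy hxy
    have hr : s.r x y := mem_block.1 (hxy ▸ mem_block.2 (s.refl' y))
    obtain ⟨z, -, hz⟩ := hP x
    exact (hz x ⟨s.refl' x, (mem_filter.1 hx).2⟩).trans (hz y ⟨hr, (mem_filter.1 hy).2⟩).symm
  · intro C hC
    obtain ⟨x, rfl⟩ := mem_blocks.1 hC
    obtain ⟨y, ⟨hxy, hy⟩, -⟩ := hP x
    exact ⟨y, mem_filter.2 ⟨mem_univ y, hy⟩, (block_eq_of_rel hxy).symm⟩

lemma card_blocks_eq_card_minima (s : Setoid (Fin n)) :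
    #(blocks s) = #(univ.filter fun y => ∀ z, s.r y z → y ≤ z) := by
  refine card_blocks_eq_card_filter _ fun x => ?_
  have hx : (block s x).Nonempty := ⟨x, mem_block.2 (s.refl' x)⟩
  have hm : s.r x ((block s x).min' hx) := mem_block.1 (min'_mem _ hx)
  refine ⟨_, ⟨hm, fun z hz => min'_le _ _ (mem_block.2 (s.trans' hm hz))⟩, ?_⟩
  rintro y ⟨hxy, hy⟩
  exact le_antisymm (hy _ (s.trans' (s.symm' hxy) hm)) (min'_le _ _ (mem_block.2 hxy))

lemma card_blocks_eq_card_maxima (s : Setoid (Fin n)) :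
    #(blocks s) = #(univ.filter fun y => ∀ z, s.r y z → z ≤ y) := by
  refine card_blocks_eq_card_filter _ fun x => ?_
  have hx : (block s x).Nonempty := ⟨x, mem_block.2 (s.refl' x)⟩
  have hm : s.r x ((block s x).max' hx) := mem_block.1 (max'_mem _ hx)
  refine ⟨_, ⟨hm, fun z hz => le_max' _ _ (mem_block.2 (s.trans' hm hz))⟩, ?_⟩
  rintro y ⟨hxy, hy⟩
  exact le_antisymm (le_max' _ _ (mem_block.2 hxy)) (hy _ (s.trans' (s.symm' hxy) hm))

end Blocks

section CyclicSuccessor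

variable {α : Type*} [LinearOrder α] {A B C : Set α} {a b x y : α}

def IsNextIn (C : Set α) (x y : α) : Prop :=
  y ∈ C ∧ ((x < y ∧ ∀ z ∈ C, x < z → y ≤ z) ∨ ((∀ z ∈ C, z ≤ x) ∧ ∀ z ∈ C, y ≤ z))

lemma IsNextIn.unique {y' : α} (h : IsNextIn C x y) (h' : IsNextIn C x y') : y = y' := by
  obtain ⟨hy, ⟨hlt, hle⟩ | ⟨hmax, hmin⟩⟩ := h <;>
    obtain ⟨hy', ⟨hlt', hle'⟩ | ⟨hmax', hmin'⟩⟩ := h'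
  · exact le_antisymm (hle _ hy' hlt') (hle' _ hy hlt)
  · exact absurd (hmax' _ hy) (not_le.2 hlt)
  · exact absurd (hmax _ hy') (not_le.2 hlt')
  · exact le_antisymm (hmin _ hy') (hmin' _ hy)

/-! In the next four lemmas `B` lies in the gap of `A` right after `a`, and `b` is the largest
element of `B`: the cyclic order of `A ∪ B` is that of `A` with `B` spliced in after `a`. -/

lemma IsNextIn.union_at_gap_start (hA : ∀ u ∈ A, u ≤ a ∨ b < u) (hB : ∀ u ∈ B, a < u ∧ u ≤ b)
    (h : IsNextIn B b y) : IsNextIn (A ∪ B) a y := by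
  obtain ⟨hy, ⟨hlt, -⟩ | ⟨-, hmin⟩⟩ := h
  · exact absurd (hB y hy).2 (not_le.2 hlt)
  refine ⟨Or.inr hy, Or.inl ⟨(hB y hy).1, ?_⟩⟩
  rintro z (hz | hz) haz
  · exact ((hB y hy).2.trans_lt ((hA z hz).resolve_left (not_le.2 haz))).le
  · exact hmin z hz

lemma IsNextIn.union_at_gap_end (hA : ∀ u ∈ A, u ≤ a ∨ b < u) (hB : ∀ u ∈ B, a < u ∧ u ≤ b)
    (ha : a ∈ A) (hb : b ∈ B) (h : IsNextIn A a y) : IsNextIn (A ∪ B) b y := by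
  have hab : a < b := (hB b hb).1
  obtain ⟨hy, ⟨hlt, hle⟩ | ⟨hmax, hmin⟩⟩ := h
  · have hby : b < y := (hA y hy).resolve_left (not_le.2 hlt)
    refine ⟨Or.inl hy, Or.inl ⟨hby, ?_⟩⟩
    rintro z (hz | hz) hbz
    · exact hle z hz (hab.trans hbz)
    · exact absurd (hB z hz).2 (not_le.2 hbz)
  · refine ⟨Or.inl hy, Or.inr ⟨?_, ?_⟩⟩
    · rintro z (hz | hz)
      · exact (hmax z hz).trans hab.le
      · exact (hB z hz).2
    · rintro z (hz | hz)
      · exact hmin z hz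
      · exact (hmin a ha).trans (hB z hz).1.le

lemma IsNextIn.union_left (hA : ∀ u ∈ A, u ≤ a ∨ b < u) (hB : ∀ u ∈ B, a < u ∧ u ≤ b)
    (ha : a ∈ A) (hx : x ∈ A) (hxa : x ≠ a) (h : IsNextIn A x y) : IsNextIn (A ∪ B) x y := by
  obtain ⟨hy, ⟨hlt, hle⟩ | ⟨hmax, hmin⟩⟩ := h
  · refine ⟨Or.inl hy, Or.inl ⟨hlt, ?_⟩⟩
    rintro z (hz | hz) hxz
    · exact hle z hz hxz
    · rcases (hA x hx).imp (lt_of_le_of_ne · hxa) id with hxa' | hbx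
      · exact (hle a ha hxa').trans (hB z hz).1.le
      · exact absurd ((hB z hz).2.trans_lt hbx) (not_lt.2 hxz.le)
  · have hbx : b < x := (hA x hx).resolve_left fun h => hxa (le_antisymm h (hmax a ha))
    refine ⟨Or.inl hy, Or.inr ⟨?_, ?_⟩⟩
    · rintro z (hz | hz)
      · exact hmax z hz
      · exact (hB z hz).2.trans hbx.le
    · rintro z (hz | hz)
      · exact hmin z hz
      · exact (hmin a ha).trans (hB z hz).1.le

lemma IsNextIn.union_right (hA : ∀ u ∈ A, u ≤ a ∨ b < u) (hB : ∀ u ∈ B, a < u ∧ u ≤ b)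
    (hb : b ∈ B) (hx : x ∈ B) (hxb : x ≠ b) (h : IsNextIn B x y) : IsNextIn (A ∪ B) x y := by
  obtain ⟨hy, ⟨hlt, hle⟩ | ⟨hmax, -⟩⟩ := h
  · refine ⟨Or.inr hy, Or.inl ⟨hlt, ?_⟩⟩
    rintro z (hz | hz) hxz
    · have hbz : b < z := (hA z hz).resolve_left (not_le.2 ((hB x hx).1.trans hxz))
      exact (hB y hy).2.trans hbz.le
    · exact hle z hz hxz
  · exact absurd (le_antisymm (hB x hx).2 (hmax b hb)) hxb

end CyclicSuccessor

section Successor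

variable {n : ℕ} {s : Setoid (Fin n)} {x y : Fin n}

lemma isNextIn_nextFun (s : Setoid (Fin n)) (x : Fin n) :
    IsNextIn {z | s.r x z} x (nextFun s x) := by
  dsimp only [nextFun]
  split_ifs with h
  · obtain ⟨hm, hxm⟩ := mem_filter.1 (min'_mem _ h)
    refine ⟨(mem_filter.1 hm).2, Or.inl ⟨hxm, fun z hz hxz => min'_le _ _ ?_⟩⟩
    simp [show s.r x z from hz, hxz]
  · refine ⟨(mem_filter.1 (min'_mem _ _)).2, Or.inr ⟨fun z hz => ?_, fun z hz => min'_le _ _ ?_⟩⟩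
    · by_contra hzx
      exact h ⟨z, by simp [show s.r x z from hz, not_le.1 hzx]⟩
    · simp [show s.r x z from hz]

lemma nextFun_injective (s : Setoid (Fin n)) : Function.Injective (nextFun s) := by
  have key : ∀ {x y}, x < y → s.r x y → nextFun s x ≠ nextFun s y := by
    intro x y hxy hr he
    obtain ⟨-, ⟨hltx, hlex⟩ | ⟨hmaxx, -⟩⟩ := isNextIn_nextFun s x
    · obtain ⟨-, ⟨hlty, -⟩ | ⟨-, hminy⟩⟩ := isNextIn_nextFun s y
      · exact absurd (hlex y hr hxy) (not_le.2 (he ▸ hlty))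
      · exact absurd (hminy x (s.symm' hr)) (not_le.2 (he ▸ hltx))
    · exact absurd (hmaxx y hr) (not_le.2 hxy)
  intro x y he
  have hr : s.r x y :=
    s.trans' (isNextIn_nextFun s x).1 (he ▸ s.symm' (isNextIn_nextFun s y).1)
  rcases lt_trichotomy x y with h | h | h
  · exact absurd he (key h hr)
  · exact h
  · exact absurd he.symm (key h (s.symm' hr))

lemma permOf_apply (s : Setoid (Fin n)) (x : Fin n) : permOf s x = nextFun s x := by
  rw [permOf, dif_pos (Finite.injective_iff_bijective.1 (nextFun_injective s))]
  rfl

lemma isNextIn_permOf (s : Setoid (Fin n)) (x : Fin n) : IsNextIn {z | s.r x z} x (permOf s x) :=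
  permOf_apply s x ▸ isNextIn_nextFun s x

lemma permOf_eq_iff : permOf s x = y ↔ IsNextIn {z | s.r x z} x y :=
  ⟨fun h => h ▸ isNextIn_permOf s x, (isNextIn_permOf s x).unique⟩

lemma rel_permOf (s : Setoid (Fin n)) (x : Fin n) : s.r x (permOf s x) :=
  (isNextIn_permOf s x).1

lemma forall_rel_le_of_permOf_le (h : permOf s x ≤ x) : ∀ z, s.r x z → z ≤ x := by
  obtain ⟨-, ⟨hlt, -⟩ | ⟨hmax, -⟩⟩ := isNextIn_permOf s x
  · exact absurd h (not_le.2 hlt)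
  · exact hmax

lemma permOf_le_iff (s : Setoid (Fin n)) (x : Fin n) :
    permOf s x ≤ x ↔ ∀ z, s.r (permOf s x) z → permOf s x ≤ z := by
  obtain ⟨hr, ⟨hlt, -⟩ | ⟨hmax, hmin⟩⟩ := isNextIn_permOf s x
  · exact iff_of_false (not_le.2 hlt) fun h => not_le.2 hlt (h x (s.symm' hr))
  · exact iff_of_true (hmax _ hr) fun z hz => hmin z (s.trans' hr hz)

end Successor

section Cycles

variable {n : ℕ}

lemma cycleSetoid_le {t : Setoid (Fin n)} {ρ : Equiv.Perm (Fin n)} (h : ∀ x, t.r x (ρ x)) :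
    cycleSetoid ρ ≤ t := by
  intro x y hxy
  obtain ⟨k, rfl⟩ := Equiv.Perm.SameCycle.exists_nat_pow_eq hxy
  clear hxy
  induction k with
  | zero => exact t.refl' x
  | succ k ih => rw [pow_succ', Equiv.Perm.mul_apply]; exact t.trans' ih (h _)

lemma cycleSetoid_rel_apply (ρ : Equiv.Perm (Fin n)) (x : Fin n) : (cycleSetoid ρ).r x (ρ x) :=
  Equiv.Perm.sameCycle_apply_right.2 (Equiv.Perm.SameCycle.refl ρ x)

lemma sameCycle_permOf_of_isMin (s : Setoid (Fin n)) (z : Fin n) :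
    ∀ m, s.r m z → (∀ u, s.r m u → m ≤ u) → (permOf s).SameCycle m z := by
  induction z using WellFoundedLT.induction with
  | _ z ih =>
    intro m hmz hm
    obtain rfl | hlt := (hm z hmz).eq_or_lt
    · exact Equiv.Perm.SameCycle.refl _ _
    set w := (permOf s)⁻¹ z
    have hwz : permOf s w = z := Equiv.apply_symm_apply _ z
    have hrw : s.r m w := s.trans' hmz (s.symm' (hwz ▸ rel_permOf s w))
    have hw : w < z := by
      by_contra hzw
      have := (permOf_le_iff s w).1 (hwz ▸ not_lt.1 hzw) m (s.symm' (hwz ▸ hmz))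
      exact absurd hlt (not_lt.2 (hwz ▸ this))
    rw [← hwz]
    exact Equiv.Perm.sameCycle_apply_right.2 (ih w hw m hrw hm)

lemma cycleSetoid_permOf (s : Setoid (Fin n)) : cycleSetoid (permOf s) = s := by
  refine le_antisymm (cycleSetoid_le (rel_permOf s)) fun a b hab => ?_
  have hne : (block s a).Nonempty := ⟨a, mem_block.2 (s.refl' a)⟩
  have hm : s.r a ((block s a).min' hne) := mem_block.1 (min'_mem _ hne)
  have hmin : ∀ u, s.r ((block s a).min' hne) u → (block s a).min' hne ≤ u :=
    fun u hu => min'_le _ _ (mem_block.2 (s.trans' hm hu))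
  exact (sameCycle_permOf_of_isMin s a _ (s.symm' hm) hmin).symm.trans
    (sameCycle_permOf_of_isMin s b _ (s.trans' (s.symm' hm) hab) hmin)

end Cycles

section Merge

variable {n : ℕ}

def merge (t : Setoid (Fin n)) (a b : Fin n) : Setoid (Fin n) where
  r x y := t.r x y ∨ ((t.r x a ∨ t.r x b) ∧ (t.r y a ∨ t.r y b))
  iseqv := by
    refine ⟨fun x => Or.inl (t.refl' x), ?_, ?_⟩
    · rintro x y (h | ⟨hx, hy⟩)
      · exact Or.inl (t.symm' h)
      · exact Or.inr ⟨hy, hx⟩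
    · rintro x y z (h | ⟨hx, hy⟩) (h' | ⟨hy', hz⟩)
      · exact Or.inl (t.trans' h h')
      · exact Or.inr ⟨hy'.imp (t.trans' h) (t.trans' h), hz⟩
      · exact Or.inr ⟨hx, hy.imp (t.trans' (t.symm' h')) (t.trans' (t.symm' h'))⟩
      · exact Or.inr ⟨hx, hz⟩

variable {t : Setoid (Fin n)} {a b : Fin n}

lemma merge_le {u : Setoid (Fin n)} (htu : t ≤ u) (hab : u.r a b) : merge t a b ≤ u := by
  have hb : ∀ x, (t.r x a ∨ t.r x b) → u.r x b :=
    fun x hx => hx.elim (fun h => u.trans' (htu h) hab) (fun h => htu h)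
  rintro x y (h | ⟨hx, hy⟩)
  · exact htu h
  · exact u.trans' (hb x hx) (u.symm' (hb y hy))

lemma merge_rel (t : Setoid (Fin n)) (a b : Fin n) : (merge t a b).r a b :=
  Or.inr ⟨Or.inl (t.refl' a), Or.inr (t.refl' b)⟩

lemma le_merge (t : Setoid (Fin n)) (a b : Fin n) : t ≤ merge t a b := fun _ _ => Or.inl

lemma merge_eq_of_rel (hab : t.r a b) : merge t a b = t :=
  le_antisymm (merge_le le_rfl hab) (le_merge t a b)

lemma merge_congr {a' b' : Fin n} (ha : t.r a a') (hb : t.r b b') :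
    merge t a b = merge t a' b' := by
  have key : ∀ {a b a' b'}, t.r a a' → t.r b b' → merge t a b ≤ merge t a' b' :=
    fun ha hb => merge_le (le_merge t _ _) (Or.inr ⟨Or.inl ha, Or.inr hb⟩)
  exact le_antisymm (key ha hb) (key (t.symm' ha) (t.symm' hb))

lemma merge_rel_iff_of_rel {x : Fin n} (hx : t.r x a ∨ t.r x b) (z : Fin n) :
    (merge t a b).r x z ↔ t.r a z ∨ t.r b z := by
  constructor
  · rintro (h | ⟨-, hz⟩)
    · exact hx.imp (fun h' => t.trans' (t.symm' h') h) (fun h' => t.trans' (t.symm' h') h)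
    · exact hz.imp t.symm' t.symm'
  · exact fun h => Or.inr ⟨hx, h.imp t.symm' t.symm'⟩

lemma merge_rel_iff_of_not_rel {x : Fin n} (hx : ¬(t.r x a ∨ t.r x b)) (z : Fin n) :
    (merge t a b).r x z ↔ t.r x z :=
  ⟨fun h => h.resolve_right fun h' => hx h'.1, Or.inl⟩

lemma block_merge_of_rel {x : Fin n} (hx : t.r x a ∨ t.r x b) :
    block (merge t a b) x = block t a ∪ block t b := by
  ext z
  simp [merge_rel_iff_of_rel hx]

lemma block_merge_of_not_rel {x : Fin n} (hx : ¬(t.r x a ∨ t.r x b)) :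
    block (merge t a b) x = block t x := by
  ext z
  simp [merge_rel_iff_of_not_rel hx]

lemma blocks_merge (t : Setoid (Fin n)) (a b : Fin n) :
    blocks (merge t a b) =
      insert (block t a ∪ block t b) (((blocks t).erase (block t a)).erase (block t b)) := by
  ext C
  simp only [mem_blocks, mem_insert, mem_erase]
  constructor
  · rintro ⟨x, rfl⟩
    by_cases hx : t.r x a ∨ t.r x b
    · exact Or.inl (block_merge_of_rel hx)
    · rw [block_merge_of_not_rel hx]
      refine Or.inr ⟨fun he => hx (Or.inr ?_), fun he => hx (Or.inl ?_), x, rfl⟩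
      · exact t.symm' (mem_block.1 (he ▸ mem_block.2 (t.refl' x)))
      · exact t.symm' (mem_block.1 (he ▸ mem_block.2 (t.refl' x)))
  · rintro (rfl | ⟨hCb, hCa, x, rfl⟩)
    · exact ⟨a, block_merge_of_rel (Or.inl (t.refl' a))⟩
    · refine ⟨x, block_merge_of_not_rel ?_⟩
      rintro (h | h)
      · exact hCa (block_eq_of_rel h)
      · exact hCb (block_eq_of_rel h)

lemma card_blocks_merge (hab : ¬t.r a b) : #(blocks (merge t a b)) + 1 = #(blocks t) := by
  have hA : block t a ∈ blocks t := block_mem_blocks t a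
  have hAB : block t a ≠ block t b := fun h => hab (mem_block.1 (h ▸ mem_block.2 (t.refl' b)))
  have hB : block t b ∈ (blocks t).erase (block t a) :=
    mem_erase.2 ⟨hAB.symm, block_mem_blocks t b⟩
  have hnotin : block t a ∪ block t b ∉ ((blocks t).erase (block t a)).erase (block t b) := by
    intro h
    obtain ⟨x, hx⟩ := mem_blocks.1 (mem_of_mem_erase (mem_of_mem_erase h))
    have ha : t.r x a := mem_block.1 (hx ▸ mem_union_left _ (mem_block.2 (t.refl' a)))
    have hb : t.r x b := mem_block.1 (hx ▸ mem_union_right _ (mem_block.2 (t.refl' b)))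
    exact hab (t.trans' (t.symm' ha) hb)
  have htwo : 2 ≤ #(blocks t) := one_lt_card.2 ⟨_, hA, _, block_mem_blocks t b, hAB⟩
  rw [blocks_merge, card_insert_of_notMem hnotin, card_erase_of_mem hB, card_erase_of_mem hA]
  omega

lemma card_blocks_le_card_blocks_merge_add_one (t : Setoid (Fin n)) (a b : Fin n) :
    #(blocks t) ≤ #(blocks (merge t a b)) + 1 := by
  by_cases hab : t.r a b
  · rw [merge_eq_of_rel hab]; omega
  · rw [card_blocks_merge hab]

lemma card_blocks_merge_le (t : Setoid (Fin n)) (a b : Fin n) :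
    #(blocks (merge t a b)) ≤ #(blocks t) := by
  by_cases hab : t.r a b
  · rw [merge_eq_of_rel hab]
  · rw [← card_blocks_merge hab]; omega

lemma merge_cycleSetoid_rel_swap_apply (τ : Equiv.Perm (Fin n)) (a b x : Fin n) :
    (merge (cycleSetoid τ) a b).r x (Equiv.swap a b (τ x)) := by
  have hx := cycleSetoid_rel_apply τ x
  rw [Equiv.swap_apply_def]
  split_ifs with h1 h2
  · exact Or.inr ⟨Or.inl (h1 ▸ hx), Or.inr ((cycleSetoid τ).refl' b)⟩
  · exact Or.inr ⟨Or.inr (h2 ▸ hx), Or.inl ((cycleSetoid τ).refl' a)⟩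
  · exact Or.inl hx

lemma merge_cycleSetoid_swap_mul (ρ : Equiv.Perm (Fin n)) (a b : Fin n) :
    merge (cycleSetoid (Equiv.swap a b * ρ)) a b = merge (cycleSetoid ρ) a b := by
  refine le_antisymm (merge_le (cycleSetoid_le fun x => ?_) (merge_rel _ a b))
    (merge_le (cycleSetoid_le fun x => ?_) (merge_rel _ a b))
  · exact merge_cycleSetoid_rel_swap_apply ρ a b x
  · simpa using merge_cycleSetoid_rel_swap_apply (Equiv.swap a b * ρ) a b x

lemma card_blocks_cycleSetoid_le_swap_mul (ρ : Equiv.Perm (Fin n)) (a b : Fin n) :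
    #(blocks (cycleSetoid ρ)) ≤ #(blocks (cycleSetoid (Equiv.swap a b * ρ))) + 1 :=
  calc #(blocks (cycleSetoid ρ))
      ≤ #(blocks (merge (cycleSetoid ρ) a b)) + 1 :=
        card_blocks_le_card_blocks_merge_add_one _ a b
    _ = #(blocks (merge (cycleSetoid (Equiv.swap a b * ρ)) a b)) + 1 := by
        rw [merge_cycleSetoid_swap_mul]
    _ ≤ #(blocks (cycleSetoid (Equiv.swap a b * ρ))) + 1 :=
        Nat.add_le_add_right (card_blocks_merge_le _ a b) 1

lemma permOf_merge (hA : ∀ u, t.r a u → u ≤ a ∨ b < u) (hB : ∀ u, t.r b u → a < u ∧ u ≤ b) :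
    permOf (merge t a b) = permOf t * Equiv.swap a b := by
  ext1 x
  rw [Equiv.Perm.mul_apply, permOf_eq_iff]
  by_cases hx : t.r x a ∨ t.r x b
  · have hset : {z | (merge t a b).r x z} = {z | t.r a z} ∪ {z | t.r b z} :=
      Set.ext (merge_rel_iff_of_rel hx)
    rw [hset]
    obtain rfl | hxa := eq_or_ne x a
    · rw [Equiv.swap_apply_left]
      exact (isNextIn_permOf t b).union_at_gap_start hA hB
    obtain rfl | hxb := eq_or_ne x b
    · rw [Equiv.swap_apply_right]
      exact (isNextIn_permOf t a).union_at_gap_end hA hB (t.refl' a) (t.refl' x)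
    rw [Equiv.swap_apply_of_ne_of_ne hxa hxb]
    rcases hx with hx | hx
    · exact (setOf_rel_eq_of_rel hx ▸ isNextIn_permOf t x).union_left hA hB
        (t.refl' a) (t.symm' hx) hxa
    · exact (setOf_rel_eq_of_rel hx ▸ isNextIn_permOf t x).union_right hA hB
        (t.refl' b) (t.symm' hx) hxb
  · have hset : {z | (merge t a b).r x z} = {z | t.r x z} :=
      Set.ext (merge_rel_iff_of_not_rel hx)
    have hxa : x ≠ a := by rintro rfl; exact hx (Or.inl (t.refl' x))
    have hxb : x ≠ b := by rintro rfl; exact hx (Or.inr (t.refl' x))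
    rw [hset, Equiv.swap_apply_of_ne_of_ne hxa hxb]
    exact isNextIn_permOf t x

end Merge

section Descents

variable {n : ℕ}

def descents (σ : Equiv.Perm (Fin n)) : Finset (Fin n) := univ.filter fun x => σ x ≤ x

lemma mem_descents {σ : Equiv.Perm (Fin n)} {x : Fin n} : x ∈ descents σ ↔ σ x ≤ x := by
  simp [descents]

lemma cycleMaxima_subset_descents (σ : Equiv.Perm (Fin n)) :
    univ.filter (fun x => ∀ z, (cycleSetoid σ).r x z → z ≤ x) ⊆ descents σ := fun x hx =>
  mem_descents.2 ((mem_filter.1 hx).2 _ (cycleSetoid_rel_apply σ x))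

lemma forall_le_of_card_descents_le {σ : Equiv.Perm (Fin n)}
    (h : #(descents σ) ≤ #(blocks (cycleSetoid σ))) :
    ∀ x ∈ descents σ, ∀ z, σ.SameCycle x z → z ≤ x := by
  rw [card_blocks_eq_card_maxima] at h
  rw [← eq_of_subset_of_card_le (cycleMaxima_subset_descents σ) h]
  exact fun x hx => (mem_filter.1 hx).2

lemma apply_le_of_forall_le {σ : Equiv.Perm (Fin n)}
    (hasc : ∀ y z, σ.SameCycle y z → y < z → y < σ y) {x : Fin n}
    (hx : ∀ z, σ.SameCycle x z → z ≤ x) (z : Fin n) (hz : σ.SameCycle x z) : σ x ≤ z := by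
  induction z using WellFoundedLT.induction with
  | _ z ih =>
    have hw : σ.SameCycle x (σ.symm z) := Equiv.Perm.sameCycle_symm_apply_right.2 hz
    obtain hwx | hwx := eq_or_ne (σ.symm z) x
    · rw [← hwx, Equiv.apply_symm_apply]
    · have hlt : σ.symm z < z := by
        simpa using hasc _ x hw.symm (lt_of_le_of_ne (hx _ hw) hwx)
      exact (ih _ hlt hw).trans hlt.le

/-- If `x < u < σ x`, then `σ` maps `{x} ∪ {w ≥ u in the cycle, w not its maximum}` injectively
into the equally large `{w ≥ u in the cycle}`, so `u` would have a preimage there. -/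
lemma apply_le_of_lt {σ : Equiv.Perm (Fin n)}
    (hasc : ∀ y z, σ.SameCycle y z → y < z → y < σ y) {x u : Fin n}
    (hu : σ.SameCycle x u) (hxu : x < u) : σ x ≤ u := by
  refine not_lt.1 fun hux => ?_
  set B := block (cycleSetoid σ) x
  have hB : B.Nonempty := ⟨x, mem_block.2 (Equiv.Perm.SameCycle.refl σ x)⟩
  set M := B.max' hB
  have hM : σ.SameCycle x M := mem_block.1 (max'_mem B hB)
  have hlt : ∀ w ∈ B, w ≠ M → w < σ w := fun w hw hwM =>
    hasc w M ((mem_block.1 hw).symm.trans hM) (lt_of_le_of_ne (le_max' B w hw) hwM)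
  set U := B.filter fun w => u ≤ w
  have hMU : M ∈ U := mem_filter.2 ⟨max'_mem B hB, le_max' B u (mem_block.2 hu)⟩
  have hxU : x ∉ U.erase M := fun hx => not_le.2 hxu (mem_filter.1 (mem_of_mem_erase hx)).2
  have hmaps : Set.MapsTo σ (insert x (U.erase M) : Finset (Fin n)) U := by
    intro w hw
    rcases mem_insert.1 (mem_coe.1 hw) with rfl | hw
    · exact mem_filter.2 ⟨mem_block.2 (cycleSetoid_rel_apply σ w), hux.le⟩
    · obtain ⟨hwM, hwU⟩ := mem_erase.1 hw
      obtain ⟨hxw, huw⟩ := mem_filter.1 hwU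
      exact mem_filter.2 ⟨mem_block.2 (Equiv.Perm.sameCycle_apply_right.2 (mem_block.1 hxw)),
        huw.trans (hlt w hxw hwM).le⟩
  have hcard : #U ≤ #(insert x (U.erase M)) := by
    rw [card_insert_of_notMem hxU, card_erase_of_mem hMU]
    omega
  obtain ⟨w, hw, hwu⟩ := surjOn_of_injOn_of_card_le σ hmaps σ.injective.injOn hcard
    (mem_filter.2 ⟨mem_block.2 hu, le_rfl⟩)
  rcases mem_insert.1 hw with rfl | hw
  · exact absurd hwu (ne_of_gt hux)
  · obtain ⟨hwM, hwU⟩ := mem_erase.1 hw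
    exact absurd (hwu ▸ hlt w (mem_filter.1 hwU).1 hwM) (not_lt.2 (mem_filter.1 hwU).2)

lemma permOf_cycleSetoid {σ : Equiv.Perm (Fin n)}
    (hσ : #(descents σ) ≤ #(blocks (cycleSetoid σ))) : permOf (cycleSetoid σ) = σ := by
  have hasc : ∀ y z, σ.SameCycle y z → y < z → y < σ y := fun y z hyz hlt =>
    not_le.1 fun hy => not_le.2 hlt (forall_le_of_card_descents_le hσ y (mem_descents.2 hy) z hyz)
  ext1 x
  refine permOf_eq_iff.2 ⟨cycleSetoid_rel_apply σ x, ?_⟩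
  by_cases hx : ∀ z, σ.SameCycle x z → z ≤ x
  · exact Or.inr ⟨hx, apply_le_of_forall_le hasc hx⟩
  · push Not at hx
    obtain ⟨u, hu, hxu⟩ := hx
    exact Or.inl ⟨hasc x u hu hxu, fun z hz hxz => apply_le_of_lt hasc hz hxz⟩

end Descents

section Kreweras

variable {n : ℕ} {s : Setoid (Fin n)}

lemma lt_permOf_topS {x y : Fin n} (h : x < y) :
    x < permOf (topS n) x ∧ permOf (topS n) x ≤ y := by
  obtain ⟨-, ⟨hlt, hle⟩ | ⟨hmax, -⟩⟩ := isNextIn_permOf (topS n) x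
  · exact ⟨hlt, hle y trivial h⟩
  · exact absurd (hmax y trivial) (not_le.2 h)

lemma permOf_topS_of_forall_le {x : Fin n} (hx : ∀ z, z ≤ x) :
    permOf (topS n) x = ⟨0, x.pos⟩ := by
  obtain ⟨-, ⟨hlt, -⟩ | ⟨-, hmin⟩⟩ := isNextIn_permOf (topS n) x
  · exact absurd (hx _) (not_le.2 hlt)
  · exact le_antisymm (hmin _ trivial) (Nat.zero_le _)

def krewerasPerm (s : Setoid (Fin n)) : Equiv.Perm (Fin n) := (permOf s)⁻¹ * permOf (topS n)

lemma permOf_krewerasPerm_apply (s : Setoid (Fin n)) (x : Fin n) :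
    permOf s (krewerasPerm s x) = permOf (topS n) x := by
  simp [krewerasPerm]

lemma krewerasPerm_apply_le_iff {x y : Fin n} (hxy : x < y) :
    krewerasPerm s x ≤ x ↔ ¬∀ z, s.r (permOf (topS n) x) z → permOf (topS n) x ≤ z := by
  obtain ⟨hxc, -⟩ := lt_permOf_topS hxy
  rw [← permOf_krewerasPerm_apply, ← permOf_le_iff, permOf_krewerasPerm_apply, not_le]
  exact ⟨fun h => h.trans_lt hxc, fun h => not_lt.1 fun hxw => not_le.2 h (lt_permOf_topS hxw).2⟩

lemma card_descents_krewerasPerm_add_card_blocks (s : Setoid (Fin n)) (hn : 0 < n) :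
    #(descents (krewerasPerm s)) + #(blocks s) = n + 1 := by
  set z₀ : Fin n := ⟨0, hn⟩
  have hdesc : descents (krewerasPerm s) = univ.filter fun x => permOf (topS n) x = z₀ ∨
      ¬∀ z, s.r (permOf (topS n) x) z → permOf (topS n) x ≤ z := by
    ext x
    simp only [mem_descents, mem_filter, mem_univ, true_and]
    by_cases hx : ∃ y, x < y
    · obtain ⟨y, hxy⟩ := hx
      have hne : permOf (topS n) x ≠ z₀ :=
        ne_of_gt ((Nat.zero_le _).trans_lt (lt_permOf_topS hxy).1)
      rw [krewerasPerm_apply_le_iff hxy, or_iff_right hne]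
    · push Not at hx
      exact iff_of_true (hx _) (Or.inl (permOf_topS_of_forall_le hx))
  have hins : univ.filter (fun c => c = z₀ ∨ ¬∀ z, s.r c z → c ≤ z) =
      insert z₀ (univ.filter fun c => ¬∀ z, s.r c z → c ≤ z) := by
    ext
    simp
  have hz₀ : z₀ ∉ univ.filter fun c => ¬∀ z, s.r c z → c ≤ z := by
    simp only [mem_filter, mem_univ, true_and, not_not]
    exact fun z _ => Nat.zero_le _
  have hsplit := card_filter_add_card_filter_not (s := univ) fun c => ∀ z, s.r c z → c ≤ z
  rw [card_univ, Fintype.card_fin] at hsplit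
  rw [hdesc, card_equiv (permOf (topS n)) (t := univ.filter fun c => c = z₀ ∨
    ¬∀ z, s.r c z → c ≤ z) (by simp), hins, card_insert_of_notMem hz₀, card_blocks_eq_card_minima]
  omega

lemma IsNC.merge_of_forall_lt (hs : IsNC s) {z₀ m : Fin n} (hz₀ : ∀ u, z₀ ≤ u)
    (hlow : ∀ z < m, s.r z₀ z) : IsNC (merge s z₀ m) := by
  have hbetween : ∀ p q r, p < q → q < r → (s.r q z₀ ∨ s.r q m) → s.r p r →
      s.r p z₀ ∨ s.r p m := by
    intro p q r hpq hqr hq hpr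
    rcases hq with hq | hq
    · obtain rfl | hz := (hz₀ p).eq_or_lt
      · exact Or.inl (s.refl' _)
      · exact Or.inl (s.symm' (hs z₀ p q r hz hpq hqr (s.symm' hq) hpr))
    · rcases lt_trichotomy p m with hpm | rfl | hmp
      · exact Or.inl (s.symm' (hlow p hpm))
      · exact Or.inr (s.refl' _)
      · exact Or.inr (s.symm' (hs m p q r hmp hpq hqr (s.symm' hq) hpr))
  intro p₁ p₂ p₃ p₄ h₁₂ h₂₃ h₃₄ h₁₃ h₂₄
  rcases h₁₃ with h₁₃ | ⟨hU₁, hU₃⟩ <;> rcases h₂₄ with h₂₄ | ⟨hU₂, hU₄⟩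
  · exact Or.inl (hs p₁ p₂ p₃ p₄ h₁₂ h₂₃ h₃₄ h₁₃ h₂₄)
  · exact Or.inr ⟨hbetween p₁ p₂ p₃ h₁₂ h₂₃ hU₂ h₁₃, hU₂⟩
  · exact Or.inr ⟨hU₁, hbetween p₂ p₃ p₄ h₂₃ h₃₄ hU₃ h₂₄⟩
  · exact Or.inr ⟨hU₁, hU₂⟩

/-- In cyclic order the block of `m` sits between `m - 1` and its successor in the block of
`z₀`, so merging the two blocks multiplies `permOf s` by a transposition. -/
lemma IsNC.exists_merge_of_forall_lt (hs : IsNC s) {z₀ m : Fin n} (hz₀ : ∀ u, z₀ ≤ u)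
    (hm : ¬s.r z₀ m) (hlow : ∀ z < m, s.r z₀ z) :
    ∃ a b, ¬s.r a b ∧ IsNC (merge s a b) ∧ permOf (merge s a b) = permOf s * Equiv.swap a b := by
  have hz₀m : z₀ < m := (hz₀ m).lt_of_ne fun h => hm (h ▸ s.refl' z₀)
  set a : Fin n := ⟨m - 1, by omega⟩
  have ham : a < m := show m.val - 1 < m.val by have : z₀.val < m.val := hz₀m; omega
  have hgap : ∀ u, a < u → m ≤ u := fun u h => show m.val ≤ u.val by
    have : m.val - 1 < u.val := h
    omega
  have ha : s.r z₀ a := hlow a ham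
  have hmne : (block s m).Nonempty := ⟨m, mem_block.2 (s.refl' m)⟩
  set b := (block s m).max' hmne
  have hb : s.r m b := mem_block.1 (max'_mem _ hmne)
  have hA : ∀ u, s.r a u → u ≤ a ∨ b < u := by
    refine fun u hu => or_iff_not_imp_left.2 fun hau => not_le.1 fun hub => hm ?_
    have hu : s.r z₀ u := s.trans' ha hu
    have hmu : m < u := (hgap u (not_le.1 hau)).lt_of_ne fun h => hm (h ▸ hu)
    obtain rfl | hub := hub.eq_or_lt
    · exact s.trans' hu (s.symm' hb)
    · exact hs z₀ m u b hz₀m hmu hub hu hb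
  have hB : ∀ u, s.r b u → a < u ∧ u ≤ b := by
    intro u hu
    have hmu : s.r m u := s.trans' hb hu
    exact ⟨ham.trans_le (not_lt.1 fun hu => hm (s.trans' (hlow u hu) (s.symm' hmu))),
      le_max' _ u (mem_block.2 hmu)⟩
  refine ⟨a, b, fun hab => hm (s.trans' ha (s.trans' hab (s.symm' hb))), ?_, permOf_merge hA hB⟩
  rw [merge_congr (s.symm' ha) (s.symm' hb)]
  exact hs.merge_of_forall_lt hz₀ hlow

lemma IsNC.exists_merge (hs : IsNC s) (hn : 0 < n) (hcard : 2 ≤ #(blocks s)) :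
    ∃ a b, ¬s.r a b ∧ IsNC (merge s a b) ∧ permOf (merge s a b) = permOf s * Equiv.swap a b := by
  set z₀ : Fin n := ⟨0, hn⟩
  have hout : (univ.filter fun x => ¬s.r z₀ x).Nonempty := by
    by_contra hempty
    have h : ∀ x, s.r z₀ x := fun x =>
      not_not.1 fun hx => hempty ⟨x, mem_filter.2 ⟨mem_univ x, hx⟩⟩
    have : blocks s = {block s z₀} := by
      ext C
      simp only [mem_blocks, mem_singleton]
      exact ⟨fun ⟨x, hx⟩ => hx ▸ (block_eq_of_rel (h x)).symm, fun hC => ⟨z₀, hC.symm⟩⟩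
    simp [this] at hcard
  obtain ⟨m, hm, hmin⟩ := exists_min_image _ id hout
  exact hs.exists_merge_of_forall_lt (fun u => Nat.zero_le u.val) (mem_filter.1 hm).2
    fun z hz => not_not.1 fun h => not_le.2 hz (hmin z (mem_filter.2 ⟨mem_univ z, h⟩))

lemma card_blocks_cycleSetoid_one (n : ℕ) :
    #(blocks (cycleSetoid (1 : Equiv.Perm (Fin n)))) = n := by
  rw [card_blocks_eq_card_minima, filter_true_of_mem, card_univ, Fintype.card_fin]
  intro x _ z hz
  exact (Equiv.Perm.sameCycle_one.1 hz).le

lemma eq_topS_of_card_blocks_le_one (h : #(blocks s) ≤ 1) : s = topS n := by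
  refine Setoid.ext fun x y => iff_of_true ?_ trivial
  have hxy := card_le_one.1 h _ (block_mem_blocks s x) _ (block_mem_blocks s y)
  exact mem_block.1 (hxy ▸ mem_block.2 (s.refl' y))

theorem IsNC.le_card_blocks_add_card_blocks_kreweras (hs : IsNC s) (hn : 0 < n) :
    n + 1 ≤ #(blocks s) + #(blocks (kreweras s)) := by
  induction hk : #(blocks s) using Nat.strong_induction_on generalizing s with
  | _ k ih =>
    rcases lt_or_ge k 2 with hk2 | hk2
    · have hk1 : 1 ≤ k := hk ▸ card_pos.2 ⟨_, block_mem_blocks s ⟨0, hn⟩⟩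
      obtain rfl := eq_topS_of_card_blocks_le_one (s := s) (by omega)
      rw [kreweras, inv_mul_cancel, card_blocks_cycleSetoid_one]
      omega
    · obtain ⟨a, b, hab, hs', hperm⟩ := hs.exists_merge hn (hk ▸ hk2)
      have hmerge := card_blocks_merge hab
      have hK : krewerasPerm (merge s a b) = Equiv.swap a b * krewerasPerm s := by
        rw [krewerasPerm, krewerasPerm, hperm, mul_inv_rev, Equiv.swap_inv, mul_assoc]
      have hswap := card_blocks_cycleSetoid_le_swap_mul (krewerasPerm (merge s a b)) a b
      rw [hK, Equiv.swap_mul_self_mul] at hswap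
      have := ih _ (by omega) hs' rfl
      rw [kreweras, ← krewerasPerm, hK] at this
      rw [kreweras, ← krewerasPerm]
      omega

theorem IsNC.permOf_kreweras (hs : IsNC s) : permOf (kreweras s) = krewerasPerm s := by
  rcases n.eq_zero_or_pos with rfl | hn
  · exact Subsingleton.elim _ _
  refine permOf_cycleSetoid ?_
  have := hs.le_card_blocks_add_card_blocks_kreweras hn
  have := card_descents_krewerasPerm_add_card_blocks s hn
  rw [kreweras, ← krewerasPerm] at *
  omega

lemma exists_rel_lt_lt_permOf {p q r : Fin n} (hpq : p < q) (hqr : q < r) (hpr : s.r p r)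
    (hpq' : ¬s.r p q) : ∃ x, s.r p x ∧ p ≤ x ∧ x < q ∧ q < permOf s x ∧ permOf s x ≤ r := by
  set U := (block s p).filter (· < q)
  have hU : U.Nonempty := ⟨p, mem_filter.2 ⟨mem_block.2 (s.refl' p), hpq⟩⟩
  obtain ⟨hpx, hxq⟩ := mem_filter.1 (max'_mem U hU)
  have hpx : s.r p (U.max' hU) := mem_block.1 hpx
  obtain ⟨hrel, ⟨hlt, hle⟩ | ⟨hmax, -⟩⟩ := isNextIn_permOf s (U.max' hU)
  · refine ⟨_, hpx, le_max' U p (mem_filter.2 ⟨mem_block.2 (s.refl' p), hpq⟩), hxq, ?_,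
      hle r (s.trans' (s.symm' hpx) hpr) (hxq.trans hqr)⟩
    refine lt_of_le_of_ne (not_lt.1 fun hlt' => not_le.2 hlt (le_max' U _ ?_)) ?_
    · exact mem_filter.2 ⟨mem_block.2 (s.trans' hpx hrel), hlt'⟩
    · rintro heq
      exact hpq' (heq ▸ s.trans' hpx hrel)
  · exact absurd (hmax r (s.trans' (s.symm' hpx) hpr)) (not_le.2 (hxq.trans hqr))

lemma exists_crossing_of_not_isNC (h : ¬IsNC s) :
    ∃ x y, x < y ∧ y < permOf s x ∧ permOf s x < permOf s y := by
  simp only [IsNC, not_forall] at h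
  obtain ⟨p₁, p₂, p₃, p₄, h₁₂, h₂₃, h₃₄, h₁₃, h₂₄, h₁₂'⟩ := h
  obtain ⟨x, hx, -, hxp₂, hp₂c, hcp₃⟩ := exists_rel_lt_lt_permOf h₁₂ h₂₃ h₁₃ h₁₂'
  have hp₂c' : ¬s.r p₂ (permOf s x) := fun h =>
    h₁₂' (s.trans' (s.trans' hx (rel_permOf s x)) (s.symm' h))
  obtain ⟨y, -, hp₂y, hyc, hcd, -⟩ :=
    exists_rel_lt_lt_permOf hp₂c (hcp₃.trans_lt h₃₄) h₂₄ hp₂c'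
  exact ⟨x, y, hxp₂.trans_le hp₂y, hyc, hcd⟩

theorem isNC_kreweras (hs : IsNC s) : IsNC (kreweras s) := by
  by_contra hK
  obtain ⟨x, y, hxy, hyc, hcd⟩ := exists_crossing_of_not_isNC hK
  rw [hs.permOf_kreweras] at hyc hcd
  have hc := permOf_krewerasPerm_apply s x
  have hd := permOf_krewerasPerm_apply s y
  obtain ⟨hx₁, hx₁y⟩ := lt_permOf_topS hxy
  obtain ⟨hy₁, hy₁c⟩ := lt_permOf_topS hyc
  have hcmax := forall_rel_le_of_permOf_le (hc ▸ (hx₁y.trans hyc.le))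
  have hrc : s.r (krewerasPerm s x) (permOf (topS n) x) := hc ▸ rel_permOf s _
  have hrd : s.r (krewerasPerm s y) (permOf (topS n) y) := hd ▸ rel_permOf s _
  have hcd' : s.r (krewerasPerm s x) (krewerasPerm s y) := by
    obtain heq | hlt := hy₁c.eq_or_lt
    · exact heq ▸ s.symm' hrd
    · have := hs _ _ _ _ (hx₁y.trans_lt hy₁) hlt hcd (s.symm' hrc) (s.symm' hrd)
      exact s.trans' hrc (s.trans' this (s.symm' hrd))
  exact absurd (hcmax _ hcd') (not_le.2 hcd)

lemma IsNC.kreweras_injective {t : Setoid (Fin n)} (hs : IsNC s) (ht : IsNC t)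
    (h : kreweras s = kreweras t) : s = t := by
  have hP := congrArg permOf h
  rw [hs.permOf_kreweras, ht.permOf_kreweras, krewerasPerm, krewerasPerm, mul_left_inj,
    inv_inj] at hP
  rw [← cycleSetoid_permOf s, ← cycleSetoid_permOf t, hP]

def krewerasNC (n : ℕ) : Equiv.Perm (NC n) :=
  Equiv.ofBijective (fun π => ⟨kreweras π.1, isNC_kreweras π.2⟩) <|
    Finite.injective_iff_bijective.1 fun π ρ h =>
      Subtype.ext (IsNC.kreweras_injective π.2 ρ.2 (congrArg Subtype.val h))

lemma IsNC.kreweras_kreweras (hs : IsNC s) :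
    kreweras (kreweras s) =
      cycleSetoid ((permOf (topS n))⁻¹ * permOf s * (permOf (topS n))⁻¹⁻¹) := by
  rw [kreweras, hs.permOf_kreweras, krewerasPerm, mul_inv_rev, inv_inv, inv_inv]

lemma block_cycleSetoid_conj (g ρ : Equiv.Perm (Fin n)) (x : Fin n) :
    block (cycleSetoid (g * ρ * g⁻¹)) (g x) = (block (cycleSetoid ρ) x).map g.toEmbedding := by
  ext z
  simp only [mem_block, mem_map_equiv]
  show (g * ρ * g⁻¹).SameCycle (g x) z ↔ ρ.SameCycle x (g.symm z)
  rw [Equiv.Perm.sameCycle_conj]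
  simp [Equiv.Perm.inv_def]

lemma prod_blocks_cycleSetoid_conj {M : Type*} [CommMonoid M] (g ρ : Equiv.Perm (Fin n))
    (f : ℕ → M) :
    ∏ B ∈ blocks (cycleSetoid (g * ρ * g⁻¹)), f #B = ∏ B ∈ blocks (cycleSetoid ρ), f #B := by
  have hblocks : blocks (cycleSetoid (g * ρ * g⁻¹)) =
      (blocks (cycleSetoid ρ)).map ⟨fun B => B.map g.toEmbedding, map_injective _⟩ := by
    ext C
    simp only [mem_blocks, mem_map, Function.Embedding.coeFn_mk]
    constructor
    · rintro ⟨x, rfl⟩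
      refine ⟨_, ⟨g⁻¹ x, rfl⟩, ?_⟩
      rw [← block_cycleSetoid_conj]
      exact congrArg _ (g.apply_symm_apply x)
    · rintro ⟨_, ⟨x, rfl⟩, rfl⟩
      exact ⟨g x, block_cycleSetoid_conj g ρ x⟩
  rw [hblocks, prod_map]
  simp

lemma Yprod_eq_prod_blocks (w : Fin n → Fin 1) (s : Setoid (Fin n)) :
    Yprod w s = ∏ B ∈ blocks s, Ygen ⟨#B, fun _ => 0⟩ :=
  prod_congr rfl fun _ _ => congrArg Ygen (Sigma.ext rfl (heq_of_eq (Subsingleton.elim _ _)))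

lemma IsNC.Yprod_kreweras_kreweras (hs : IsNC s) (w : Fin n → Fin 1) :
    Yprod w (kreweras (kreweras s)) = Yprod w s := by
  rw [Yprod_eq_prod_blocks, Yprod_eq_prod_blocks, hs.kreweras_kreweras,
    prod_blocks_cycleSetoid_conj _ _ fun m => Ygen ⟨m, fun _ => (0 : Fin 1)⟩, cycleSetoid_permOf]

end Kreweras

/-- Lemma 7.1.  The Hopf algebra `Y^(1)` is cocommutative:
`F ∘ Δ = Δ` where `F` is the flip of the two tensor factors. -/
theorem Y1_cocommutative :
    (Algebra.TensorProduct.comm ℂ (Yalg 1) (Yalg 1)).toAlgHom.comp (Δk 1) = Δk 1 := by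
  refine MvPolynomial.algHom_ext fun q => ?_
  have hΔ : Δk 1 (MvPolynomial.X q) =
      ∑ π : NC q.1.1, Yprod q.1.2 π.1 ⊗ₜ[ℂ] Yprod q.1.2 (kreweras π.1) :=
    MvPolynomial.aeval_X _ q
  rw [AlgHom.comp_apply, hΔ, map_sum]
  conv_rhs => rw [← Equiv.sum_comp (krewerasNC q.1.1)]
  refine sum_congr rfl fun π _ => ?_
  simp [krewerasNC, π.2.Yprod_kreweras_kreweras]

end FreeProb

end
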